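/- Let q = (√3 − 1)/2 and let f : ℝ → ℝ be a solution of Schilling's problem for q. Then f(x) = 0 for every x in the set ℤ + 2qℤ = {m + 2nq : m, n ∈ ℤ}. -/

import Mathlib

/-!
Write `x'` for the Galois conjugate of a point `x = a + 2bq` of `ℤ + 2qℤ = ℤ[√3]`, i.e. the same
expression in the other root `-1 - q` of `2r² + 2r = 1`. Since `1/q = 2q + 2`, the functional
equation expresses `f x` through `f` at the three lattice points `x/q + e`, `e ∈ {-1, 0, 1}`,
whose conjugates are `-2q x' + e`. The map `y ↦ 2q y + 1` contracts towards `2 + √3 < 4`, so a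
descent on `|x'|` reduces the claim to the lattice points with `|x'| ≤ 4`. Among those only `0`
and `±(1 - 2q)` lie in the support interval `[-q/(1-q), q/(1-q)]`: `0` is a fixed point of the
equation with factor `1/(2q) ≠ 1`, and `±(1 - 2q)` form a two-cycle with factor `1/(16q²) ≠ 1`.
-/

namespace Schilling

theorem forall_of_contraction {α : Type*} (μ : α → ℝ) {P : α → Prop} {c d C : ℝ} (hc : c ≤ 1)
    (hC : d < (1 - c) * C)
    (h : ∀ x, (C < μ x → ∀ y, μ y ≤ c * μ x + d → P y) → P x) (x : α) : P x := by
  set δ := (1 - c) * C - d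
  have hδ : 0 < δ := sub_pos.2 hC
  have key : ∀ n : ℕ, ∀ x, μ x ≤ C + n * δ → P x := by
    intro n
    induction n with
    | zero => exact fun x hx => h x fun hCx => absurd hx (by simpa using hCx)
    | succ n ih =>
      refine fun x hx => h x fun hCx y hy => ih y ?_
      have := mul_le_mul_of_nonneg_left hCx.le (sub_nonneg.2 hc)
      push_cast at hx
      linarith
  obtain ⟨n, hn⟩ := exists_nat_ge ((μ x - C) / δ)
  exact key n x (by rw [div_le_iff₀ hδ] at hn; linarith)

structure IsSchillingSolution (q : ℝ) (f : ℝ → ℝ) : Prop where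
  apply_mul : ∀ x, f (q * x) = 1 / (4 * q) * (f (x - 1) + f (x + 1) + 2 * f x)
  apply_eq_zero : ∀ x, q / (1 - q) < |x| → f x = 0

theorem IsSchillingSolution.apply_zero {q : ℝ} {f : ℝ → ℝ} (hf : IsSchillingSolution q f)
    (hq₀ : 0 < q) (hq : q < 1 / 2) : f 0 = 0 := by
  have hQ : q / (1 - q) < 1 := by rw [div_lt_one (by linarith)]; linarith
  have h := hf.apply_mul 0
  rw [hf.apply_eq_zero (0 - 1) (by norm_num [hQ]), hf.apply_eq_zero (0 + 1) (by norm_num [hQ]),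
    mul_zero] at h
  field_simp at h
  nlinarith

def latticePoint (r : ℝ) (a b : ℤ) : ℝ := a + 2 * b * r

theorem latticePoint_child {r : ℝ} (hr : 2 * r ^ 2 + 2 * r = 1) (a b e : ℤ) :
    latticePoint r (2 * (a + b) + e) a = (2 * r + 2) * latticePoint r a b + e := by
  unfold latticePoint
  push_cast
  linear_combination (-2 * b : ℝ) * hr

section Sqrt3

variable {q : ℝ} {f : ℝ → ℝ}

theorem two_mul_sq_add_two_mul (hq : q = (√3 - 1) / 2) : 2 * q ^ 2 + 2 * q = 1 := by
  have := Real.sq_sqrt (show (0 : ℝ) ≤ 3 by norm_num)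
  rw [hq]
  linear_combination this / 2

theorem one_third_lt (hq : q = (√3 - 1) / 2) : 1 / 3 < q := by
  have : 5 / 3 < √3 := by rw [Real.lt_sqrt (by norm_num)]; norm_num
  linarith

theorem lt_three_eighths (hq : q = (√3 - 1) / 2) : q < 3 / 8 := by
  have : √3 < 7 / 4 := by rw [Real.sqrt_lt' (by norm_num)]; norm_num
  linarith

theorem IsSchillingSolution.apply_eq_zero_of_three_fifths_le_abs (hf : IsSchillingSolution q f)
    (hq : q = (√3 - 1) / 2) {x : ℝ} (hx : 3 / 5 ≤ |x|) : f x = 0 := by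
  have h₁ := one_third_lt hq
  have h₂ := lt_three_eighths hq
  refine hf.apply_eq_zero x (lt_of_lt_of_le ?_ hx)
  rw [div_lt_iff₀ (by linarith)]
  linarith

theorem IsSchillingSolution.apply_latticePoint (hf : IsSchillingSolution q f)
    (hq : q = (√3 - 1) / 2) (a b : ℤ) :
    f (latticePoint q a b) = 1 / (4 * q) * (f (latticePoint q (2 * (a + b) - 1) a) +
      f (latticePoint q (2 * (a + b) + 1) a) + 2 * f (latticePoint q (2 * (a + b)) a)) := by
  have hr := two_mul_sq_add_two_mul hq
  have hx : latticePoint q a b = q * latticePoint q (2 * (a + b)) a := by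
    unfold latticePoint; push_cast; linear_combination (-a : ℝ) * hr
  have hsub : latticePoint q (2 * (a + b) - 1) a = latticePoint q (2 * (a + b)) a - 1 := by
    unfold latticePoint; push_cast; ring
  have hadd : latticePoint q (2 * (a + b) + 1) a = latticePoint q (2 * (a + b)) a + 1 := by
    unfold latticePoint; push_cast; ring
  rw [hx, hsub, hadd, hf.apply_mul]

theorem IsSchillingSolution.apply_two_mul_sub_one (hf : IsSchillingSolution q f)
    (hq : q = (√3 - 1) / 2) : f (2 * q - 1) = 0 ∧ f (1 - 2 * q) = 0 := by
  have h₁ := one_third_lt hq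
  have h₂ := lt_three_eighths hq
  have hr := two_mul_sq_add_two_mul hq
  have out (x : ℝ) (hx : x ≤ -(3 / 5) ∨ 3 / 5 ≤ x) : f x = 0 :=
    hf.apply_eq_zero_of_three_fifths_le_abs hq (le_abs'.2 hx)
  have e₁ := hf.apply_mul (2 * q)
  have e₂ := hf.apply_mul (-(2 * q))
  rw [show q * (2 * q) = 1 - 2 * q by linarith, out (2 * q + 1) (.inr (by linarith)),
    out (2 * q) (.inr (by linarith))] at e₁
  rw [show q * -(2 * q) = 2 * q - 1 by linarith, show -(2 * q) + 1 = 1 - 2 * q by ring,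
    out (-(2 * q) - 1) (.inl (by linarith)), out (-(2 * q)) (.inl (by linarith))] at e₂
  field_simp at e₁ e₂
  have hv : (16 * q ^ 2 - 1) * f (1 - 2 * q) = 0 := by linear_combination (4 * q) * e₁ + e₂
  have hv₀ := (mul_eq_zero.1 hv).resolve_left (by nlinarith)
  exact ⟨by linear_combination (4 * q) * hv₀ - e₁, hv₀⟩

theorem IsSchillingSolution.apply_latticePoint_of_abs_conj_le_four (hf : IsSchillingSolution q f)
    (hq : q = (√3 - 1) / 2) {a b : ℤ} (h : |latticePoint (-1 - q) a b| ≤ 4) :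
    f (latticePoint q a b) = 0 := by
  have h₁ := one_third_lt hq
  have h₂ := lt_three_eighths hq
  by_cases hx : 3 / 5 ≤ |latticePoint q a b|
  · exact hf.apply_eq_zero_of_three_fifths_le_abs hq hx
  unfold latticePoint at h hx
  rw [not_le, abs_lt] at hx
  rw [abs_le] at h
  have hb : -1 ≤ b ∧ b ≤ 1 := by
    have hb₁ : (b : ℝ) < 2 := by nlinarith
    have hb₂ : -2 < (b : ℝ) := by nlinarith
    have : -2 < b := by exact_mod_cast hb₂
    have : b < 2 := by exact_mod_cast hb₁
    omega
  obtain rfl : a = -b := by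
    have hb' : -1 ≤ (b : ℝ) ∧ (b : ℝ) ≤ 1 := by exact_mod_cast hb
    have hab₁ : (a + b : ℝ) < 1 := by nlinarith
    have hab₂ : -1 < (a + b : ℝ) := by nlinarith
    have : a + b < 1 := by exact_mod_cast hab₁
    have : -1 < a + b := by exact_mod_cast hab₂
    omega
  obtain rfl | rfl | rfl : b = -1 ∨ b = 0 ∨ b = 1 := by omega
  · simpa [latticePoint, sub_eq_add_neg, add_comm] using (hf.apply_two_mul_sub_one hq).2
  · simpa [latticePoint] using hf.apply_zero (by linarith) (by linarith)
  · simpa [latticePoint, sub_eq_add_neg, add_comm] using (hf.apply_two_mul_sub_one hq).1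

theorem IsSchillingSolution.apply_latticePoint_eq_zero (hf : IsSchillingSolution q f)
    (hq : q = (√3 - 1) / 2) (a b : ℤ) : f (latticePoint q a b) = 0 := by
  have h₁ := one_third_lt hq
  have h₂ := lt_three_eighths hq
  have hr : 2 * (-1 - q) ^ 2 + 2 * (-1 - q) = 1 := by
    linear_combination two_mul_sq_add_two_mul hq
  suffices ∀ p : ℤ × ℤ, f (latticePoint q p.1 p.2) = 0 from this (a, b)
  refine forall_of_contraction (fun p ↦ |latticePoint (-1 - q) p.1 p.2|) (c := 2 * q) (d := 1)
    (C := 4) (by linarith) (by linarith) ?_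
  rintro ⟨a, b⟩ ih
  rcases le_or_gt |latticePoint (-1 - q) a b| 4 with hle | hlt
  · exact hf.apply_latticePoint_of_abs_conj_le_four hq hle
  have child (e : ℤ) (he : |(e : ℝ)| ≤ 1) : f (latticePoint q (2 * (a + b) + e) a) = 0 := by
    refine ih hlt (_, _) ?_
    dsimp only
    rw [latticePoint_child hr, show 2 * (-1 - q) + 2 = -(2 * q) by ring]
    calc |-(2 * q) * latticePoint (-1 - q) a b + e|
        ≤ |-(2 * q) * latticePoint (-1 - q) a b| + |(e : ℝ)| := abs_add_le _ _
      _ ≤ 2 * q * |latticePoint (-1 - q) a b| + 1 := by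
        rw [abs_mul, abs_neg, abs_of_pos (by linarith)]
        linarith
  have h_sub := child (-1) (by simp)
  have h_add := child 1 (by simp)
  have h_mid := child 0 (by simp)
  rw [← sub_eq_add_neg] at h_sub
  rw [add_zero] at h_mid
  rw [hf.apply_latticePoint hq, h_sub, h_add, h_mid]
  simp

end Sqrt3

end Schilling

open Schilling in
theorem schilling_sqrt3_2q (q : ℝ) (hq : q = (Real.sqrt 3 - 1) / 2)
    (f : ℝ → ℝ)
    (hfe : ∀ x : ℝ, f (q * x) = (1 / (4 * q)) * (f (x - 1) + f (x + 1) + 2 * f x))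
    (hfv : ∀ x : ℝ, |x| > q / (1 - q) → f x = 0) :
    ∀ m n : ℤ, f ((m : ℝ) + 2 * (n : ℝ) * q) = 0 :=
  (IsSchillingSolution.mk hfe hfv).apply_latticePoint_eq_zero hq
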